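/- arXiv:1910.13071 — 3 statements merged into one kernel-verified Lean document; each statement's English description precedes it below -/
import Mathlib

section
/- For all integers 1 ≤ m ≤ d, k ≥ 2, and N ≥ 1, the largest cardinality of a subset of {1,...,N}^d containing no arithmetic patch of size k with orientation {e_1,...,e_m} equals N^(d-m) times the largest cardinality of a subset of {1,...,N}^m containing no arithmetic patch of size k with orientation {e_1,...,e_m}. -/
/-!
Write `ℕ^(m+n) = ℕ^m × ℕ^n`. A patch with orientation `{e_1, …, e_m}` moves only the first `m`
coordinates, so it lies in a single slice `ℕ^m × {q}`. Hence a patch-free subset of `[N]^(m+n)`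
consists of `N^n` patch-free slices, each of size at most `r_{k,m}(N)`; conversely the product of
any patch-free subset of `[N]^m` with `[N]^n` is patch-free, since projecting a patch to
its first `m` coordinates gives a patch.
-/

open scoped Classical
open Filter

noncomputable section

/-- The grid `{1,...,N}^d`. -/
def apGrid (d N : ℕ) : Finset (Fin d → ℕ) := Fintype.piFinset fun _ => Finset.Icc 1 N

/-- `A ⊆ ℕ^d` contains an arithmetic patch of size `k` with orientation `{e_1,...,e_m}`:
there are `t` and a scale `Δ > 0` such that all points `t + Δ·Σ x_i e_i`, `x_i ∈ {0,...,k-1}`,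
lie in `A`. -/
def HasPatchNat (d m k : ℕ) (A : Set (Fin d → ℕ)) : Prop :=
  ∃ t : Fin d → ℕ, ∃ Δ : ℕ, 0 < Δ ∧
    ∀ x : Fin m → Fin k,
      (fun i : Fin d => t i + Δ * (if h : (i : ℕ) < m then (x ⟨i, h⟩ : ℕ) else 0)) ∈ A

/-- `rPatch k d m N` = largest cardinality of a subset of `{1,...,N}^d` containing no
arithmetic patch of size `k` with orientation `{e_1,...,e_m}`. -/
def rPatch (k d m N : ℕ) : ℕ :=
  ((apGrid d N).powerset.filter
    (fun A : Finset (Fin d → ℕ) => ¬ HasPatchNat d m k (↑A : Set (Fin d → ℕ)))).sup Finset.card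

def patchPoint {d m k : ℕ} (t : Fin d → ℕ) (Δ : ℕ) (x : Fin m → Fin k) : Fin d → ℕ :=
  fun i => t i + Δ * if h : (i : ℕ) < m then (x ⟨i, h⟩ : ℕ) else 0

lemma HasPatchNat.mono {d m k : ℕ} {A B : Set (Fin d → ℕ)} (h : HasPatchNat d m k A)
    (hAB : A ⊆ B) : HasPatchNat d m k B := by
  obtain ⟨t, Δ, hΔ, hA⟩ := h
  exact ⟨t, Δ, hΔ, fun x => hAB (hA x)⟩

lemma card_apGrid (d N : ℕ) : (apGrid d N).card = N ^ d := by
  simp [apGrid]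

lemma card_le_rPatch {k d m N : ℕ} {A : Finset (Fin d → ℕ)} (hA : A ⊆ apGrid d N)
    (h : ¬ HasPatchNat d m k A) : A.card ≤ rPatch k d m N :=
  Finset.le_sup (by simpa using ⟨hA, h⟩)

lemma rPatch_le {k d m N r : ℕ}
    (h : ∀ A ⊆ apGrid d N, ¬ HasPatchNat d m k (A : Set (Fin d → ℕ)) → A.card ≤ r) :
    rPatch k d m N ≤ r :=
  Finset.sup_le fun A hA => by
    rw [Finset.mem_filter, Finset.mem_powerset] at hA
    exact h A hA.1 hA.2

section Append

variable {m n k : ℕ}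

lemma patchPoint_append (p : Fin m → ℕ) (q : Fin n → ℕ) (Δ : ℕ) (x : Fin m → Fin k) :
    patchPoint (Fin.append p q) Δ x = Fin.append (patchPoint p Δ x) q := by
  funext i
  refine Fin.addCases (fun j => ?_) (fun j => ?_) i <;> simp [patchPoint]

lemma append_mem_apGrid {N : ℕ} {p : Fin m → ℕ} {q : Fin n → ℕ} :
    Fin.append p q ∈ apGrid (m + n) N ↔ p ∈ apGrid m N ∧ q ∈ apGrid n N := by
  simp [apGrid, Fin.forall_fin_add]

lemma apGrid_add (N : ℕ) :
    apGrid (m + n) N = (apGrid m N ×ˢ apGrid n N).map (Fin.appendEquiv m n).toEmbedding := by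
  ext v
  obtain ⟨⟨p, q⟩, rfl⟩ := (Fin.appendEquiv m n).surjective v
  rw [Finset.mem_map_equiv, Equiv.symm_apply_apply, Finset.mem_product]
  exact append_mem_apGrid

lemma HasPatchNat.of_slice {A : Set (Fin (m + n) → ℕ)} (q : Fin n → ℕ)
    (h : HasPatchNat m m k {p | Fin.append p q ∈ A}) : HasPatchNat (m + n) m k A := by
  obtain ⟨t, Δ, hΔ, ht⟩ := h
  refine ⟨Fin.append t q, Δ, hΔ, fun x => ?_⟩
  change patchPoint (Fin.append t q) Δ x ∈ A
  rw [patchPoint_append]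
  exact ht x

lemma HasPatchNat.image_fst {A : Set (Fin (m + n) → ℕ)} (h : HasPatchNat (m + n) m k A) :
    HasPatchNat m m k ((fun v => ((Fin.appendEquiv m n).symm v).1) '' A) := by
  obtain ⟨t, Δ, hΔ, ht⟩ := h
  obtain ⟨⟨p, q⟩, rfl⟩ := (Fin.appendEquiv m n).surjective t
  refine ⟨p, Δ, hΔ, fun x => ⟨_, ht x, ?_⟩⟩
  change ((Fin.appendEquiv m n).symm (patchPoint (Fin.append p q) Δ x)).1 = _
  rw [patchPoint_append]
  exact congrArg Prod.fst ((Fin.appendEquiv m n).symm_apply_apply (patchPoint p Δ x, q))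

lemma card_eq_sum_card_slice {N : ℕ} {A : Finset (Fin (m + n) → ℕ)} (hA : A ⊆ apGrid (m + n) N) :
    A.card = ∑ q ∈ apGrid n N, ((apGrid m N).filter fun p => Fin.append p q ∈ A).card := by
  calc A.card = ((apGrid (m + n) N).filter (· ∈ A)).card := by
        rw [Finset.filter_mem_eq_inter, Finset.inter_eq_right.2 hA]
    _ = ((apGrid m N ×ˢ apGrid n N).filter ((· ∈ A) ∘ Fin.appendEquiv m n)).card := by
        rw [apGrid_add, Finset.filter_map, Finset.card_map]
        rfl
    _ = _ := by
        rw [Finset.card_filter, Finset.sum_product_right]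
        simp only [Finset.card_filter, Function.comp_apply]
        rfl

lemma rPatch_add_le (N : ℕ) : rPatch k (m + n) m N ≤ N ^ n * rPatch k m m N := by
  refine rPatch_le fun A hA hfree => ?_
  calc A.card = ∑ q ∈ apGrid n N, ((apGrid m N).filter fun p => Fin.append p q ∈ A).card :=
        card_eq_sum_card_slice hA
    _ ≤ ∑ _q ∈ apGrid n N, rPatch k m m N := by
        refine Finset.sum_le_sum fun q _ => card_le_rPatch (Finset.filter_subset _ _) fun h => ?_
        exact hfree ((h.mono fun p hp => (Finset.mem_filter.1 hp).2).of_slice q)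
    _ = N ^ n * rPatch k m m N := by rw [Finset.sum_const, card_apGrid, smul_eq_mul]

lemma le_rPatch_add (N : ℕ) : N ^ n * rPatch k m m N ≤ rPatch k (m + n) m N := by
  rw [rPatch, Finset.apply_sup_eq_sup_comp_of_linearOrder (N ^ n * ·)
    (fun _ _ h => Nat.mul_le_mul_left _ h) (mul_zero _)]
  refine Finset.sup_le fun B hB => ?_
  rw [Finset.mem_filter, Finset.mem_powerset] at hB
  let C := (B ×ˢ apGrid n N).map (Fin.appendEquiv m n).toEmbedding
  have hC : C ⊆ apGrid (m + n) N := by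
    rw [apGrid_add]
    exact Finset.map_subset_map.2 (Finset.product_subset_product_left hB.1)
  have hCB : (fun v => ((Fin.appendEquiv m n).symm v).1) '' C ⊆ (B : Set (Fin m → ℕ)) := by
    rintro _ ⟨v, hv, rfl⟩
    rw [Finset.mem_coe, Finset.mem_map_equiv, Finset.mem_product] at hv
    exact hv.1
  calc N ^ n * B.card = C.card := by simp [C, card_apGrid, mul_comm]
    _ ≤ rPatch k (m + n) m N := card_le_rPatch hC fun h => hB.2 (h.image_fst.mono hCB)

end Append

theorem rPatch_add (k m n N : ℕ) : rPatch k (m + n) m N = N ^ n * rPatch k m m N :=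
  (rPatch_add_le N).antisymm (le_rPatch_add N)

theorem rPatch_eq_general (k d m N : ℕ) (hmd : m ≤ d) :
    rPatch k d m N = N ^ (d - m) * rPatch k m m N := by
  obtain ⟨n, rfl⟩ := Nat.exists_eq_add_of_le hmd
  rw [Nat.add_sub_cancel_left, rPatch_add]

theorem rPatch_eq (k d m N : ℕ) (hm : 1 ≤ m) (hmd : m ≤ d) (hk : 2 ≤ k) (hN : 1 ≤ N) :
    rPatch k d m N = N ^ (d - m) * rPatch k m m N :=
  rPatch_eq_general k d m N hmd
end
end

section
/- Fix k ≥ 3 and ε ∈ (0, 1/16). Let N = ⌈1/(8ε)⌉, η ≥ 6 an integer, and A ⊆ {0,...,N-1} with 0 ∈ A containing no arithmetic progression of length k. Let ψ_a(x) = (η+1)(N-1)x + a, B_0 = {0}, B_n = ∪_{a∈A} ψ_a(B_{n-1}), F = ∪_n B_n. Then limsup_{M→∞} log|F ∩ [1,M]| / log M ≥ log|A| / log((1+η)(N-1)). -/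
open scoped Classical
open Filter

noncomputable section

/-- A set of naturals contains an arithmetic progression of length `k` (gap `Δ > 0`). -/
def HasAPNat (k : ℕ) (A : Set ℕ) : Prop :=
  ∃ a Δ : ℕ, 0 < Δ ∧ ∀ j : Fin k, a + Δ * (j : ℕ) ∈ A

/-!
Every digit `a < N` is smaller than `C = (η + 1)(N - 1)`, so `B n` is the set of numbers whose
base-`C` expansion consists of `n` digits from `A`. These are `|A|ⁿ` distinct numbers in
`[0, Cⁿ)`, hence `|F ∩ [1, Cⁿ⁺¹]| ≥ |A|ⁿ`, and at `M = Cⁿ⁺¹` the ratio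
`log |F ∩ [1, M]| / log M` is at least `n log |A| / ((n + 1) log C) → log |A| / log C`.
-/

open Finset Real

/-- `digitNumbers C A n` is the set of `∑ i < n, aᵢ Cⁱ` with all `aᵢ ∈ A`. -/
def digitNumbers (C : ℕ) (A : Finset ℕ) : ℕ → Finset ℤ
  | 0 => {0}
  | n + 1 => A.biUnion fun a => (digitNumbers C A n).image fun x => (C : ℤ) * x + a

theorem eq_and_eq_of_mul_add_eq_mul_add {C x y a b : ℤ} (ha₀ : 0 ≤ a) (haC : a < C)
    (hb₀ : 0 ≤ b) (hbC : b < C) (h : C * x + a = C * y + b) : x = y ∧ a = b := by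
  have hC : 0 < C := ha₀.trans_lt haC
  obtain ⟨hx, ha⟩ := (Int.ediv_emod_unique hC).2 ⟨add_comm a (C * x), ha₀, haC⟩
  obtain ⟨hy, hb⟩ := (Int.ediv_emod_unique hC).2 ⟨add_comm b (C * y), hb₀, hbC⟩
  rw [h] at hx ha
  exact ⟨hx.symm.trans hy, ha.symm.trans hb⟩

theorem digitNumbers_subset_Ico {C : ℕ} {A : Finset ℕ} (hA : ∀ a ∈ A, a < C) (n : ℕ) :
    digitNumbers C A n ⊆ Ico 0 ((C : ℤ) ^ n) := by
  induction n with
  | zero => simp [digitNumbers]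
  | succ n ih =>
    intro z hz
    simp only [digitNumbers, mem_biUnion, mem_image] at hz
    obtain ⟨a, ha, x, hx, rfl⟩ := hz
    obtain ⟨hx₀, hxC⟩ := mem_Ico.1 (ih hx)
    have haC : (a : ℤ) < C := by exact_mod_cast hA a ha
    have ha₀ : (0 : ℤ) ≤ a := Int.natCast_nonneg a
    rw [mem_Ico, pow_succ]
    constructor <;> nlinarith

theorem card_digitNumbers {C : ℕ} {A : Finset ℕ} (hA : ∀ a ∈ A, a < C) (n : ℕ) :
    #(digitNumbers C A n) = #A ^ n := by
  have hdigit : ∀ a ∈ A, (0 : ℤ) ≤ a ∧ (a : ℤ) < C := fun a ha =>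
    ⟨Int.natCast_nonneg a, by exact_mod_cast hA a ha⟩
  induction n with
  | zero => rfl
  | succ n ih =>
    rw [digitNumbers, card_biUnion]
    · rw [sum_congr rfl fun a ha => card_image_of_injective _ fun x y h =>
          (eq_and_eq_of_mul_add_eq_mul_add (hdigit a ha).1 (hdigit a ha).2
            (hdigit a ha).1 (hdigit a ha).2 h).1,
        sum_const, smul_eq_mul, ih, pow_succ, mul_comm]
    · intro a ha b hb hab
      refine disjoint_left.2 fun z hza hzb => hab ?_
      obtain ⟨x, -, rfl⟩ := mem_image.1 hza
      obtain ⟨y, -, h⟩ := mem_image.1 hzb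
      exact_mod_cast (eq_and_eq_of_mul_add_eq_mul_add (hdigit b hb).1 (hdigit b hb).2
        (hdigit a ha).1 (hdigit a ha).2 h).2.symm

theorem eq_coe_digitNumbers {C : ℕ} {A : Finset ℕ} {B : ℕ → Set ℤ} (hB0 : B 0 = {0})
    (hBs : ∀ n, B (n + 1) = ⋃ a ∈ A, (fun x => (C : ℤ) * x + a) '' B n) (n : ℕ) :
    B n = digitNumbers C A n := by
  induction n with
  | zero => simp [hB0, digitNumbers]
  | succ n ih => simp [hBs, ih, digitNumbers]

theorem pow_card_sub_one_le_card_filter_Icc {C : ℕ} {A : Finset ℕ} (hA : ∀ a ∈ A, a < C)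
    {F : Set ℤ} {n : ℕ} (hF : (digitNumbers C A n : Set ℤ) ⊆ F) :
    #A ^ n - 1 ≤ #((Icc (1 : ℤ) ((C ^ n : ℕ) : ℤ)).filter (· ∈ F)) := by
  rw [← card_digitNumbers hA n]
  refine (pred_card_le_card_erase (a := 0)).trans (card_le_card fun z hz => ?_)
  obtain ⟨hz₀, hz⟩ := mem_erase.1 hz
  obtain ⟨hz₁, hzC⟩ := mem_Ico.1 (digitNumbers_subset_Ico hA n hz)
  rw [mem_filter, mem_Icc]
  push_cast
  exact ⟨⟨by omega, hzC.le⟩, hF hz⟩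

theorem card_filter_Icc_le (p : ℤ → Prop) (M : ℕ) : #((Icc (1 : ℤ) M).filter p) ≤ M :=
  (card_filter_le _ _).trans (by simp)

section LogRatio

variable {cnt : ℕ → ℕ}

theorem log_natCast_div_log_natCast_nonneg (m M : ℕ) : 0 ≤ log m / log M :=
  div_nonneg (log_natCast_nonneg m) (log_natCast_nonneg M)

theorem log_div_log_le_one (hle : ∀ M, cnt M ≤ M) (M : ℕ) :
    log (cnt M) / log M ≤ 1 := by
  refine div_le_one_of_le₀ ?_ (log_natCast_nonneg M)
  rcases (cnt M).eq_zero_or_pos with h | h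
  · simpa [h] using log_natCast_nonneg M
  · exact log_le_log (by exact_mod_cast h) (by exact_mod_cast hle M)

theorem isBoundedUnder_log_div_log (hle : ∀ M, cnt M ≤ M) :
    IsBoundedUnder (· ≤ ·) atTop fun M : ℕ => log (cnt M) / log M :=
  isBoundedUnder_of ⟨1, log_div_log_le_one hle⟩

theorem limsup_log_div_log_nonneg (hle : ∀ M, cnt M ≤ M) :
    0 ≤ limsup (fun M : ℕ => log (cnt M) / log M) atTop :=
  le_limsup_of_frequently_le
    (Frequently.of_forall fun M => log_natCast_div_log_natCast_nonneg (cnt M) M)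
    (isBoundedUnder_log_div_log hle)

theorem le_limsup_log_div_log {C d : ℕ} (hC : 2 ≤ C) (hd : 0 < d) (hle : ∀ M, cnt M ≤ M)
    (hge : ∀ n, d ^ n ≤ cnt (C ^ (n + 1))) :
    log d / log C ≤ limsup (fun M : ℕ => log (cnt M) / log M) atTop := by
  set f : ℕ → ℝ := fun M => log (cnt M) / log M
  set L := log d / log C
  have hlogC : 0 < log C := log_pos (by exact_mod_cast hC)
  have hlower : ∀ n : ℕ, L * (n / (n + 1)) ≤ f (C ^ (n + 1)) := fun n =>
    calc L * (n / (n + 1)) = log (d ^ n : ℕ) / log (C ^ (n + 1) : ℕ) := by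
          push_cast
          rw [log_pow, log_pow]
          simp only [L]
          field_simp
          push_cast
          ring
      _ ≤ f (C ^ (n + 1)) :=
          div_le_div_of_nonneg_right (log_le_log (by positivity) (by exact_mod_cast hge n))
            (log_natCast_nonneg _)
  have htends : Tendsto (fun n : ℕ => L * (n / (n + 1))) atTop (nhds L) := by
    simpa using (tendsto_natCast_div_add_atTop (1 : ℝ)).const_mul L
  have hsub : Tendsto (fun n => C ^ (n + 1)) atTop atTop :=
    (tendsto_pow_atTop_atTop_of_one_lt hC).comp (tendsto_add_atTop_nat 1)
  calc L = limsup (fun n : ℕ => L * (n / (n + 1))) atTop := htends.limsup_eq.symm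
    _ ≤ limsup (f ∘ fun n => C ^ (n + 1)) atTop :=
        limsup_le_limsup (Eventually.of_forall hlower) htends.isBoundedUnder_ge.isCoboundedUnder_le
          (isBoundedUnder_of ⟨1, fun n => log_div_log_le_one hle _⟩)
    _ ≤ limsup f atTop :=
        hsub.limsup_comp_le_limsup
          (isCoboundedUnder_le_of_le _ fun M => log_natCast_div_log_natCast_nonneg (cnt M) M)
          (isBoundedUnder_log_div_log hle)

end LogRatio

theorem discrete_zeta_lower_general
    (N : ℕ) (η : ℕ) (hη : 6 ≤ η)
    (A : Finset ℕ) (hA : A ⊆ Finset.range N)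
    (ψ : ℕ → ℤ → ℤ) (hψ : ∀ a x, ψ a x = ((η : ℤ) + 1) * ((N : ℤ) - 1) * x + (a : ℤ))
    (B : ℕ → Set ℤ) (hB0 : B 0 = {0})
    (hBs : ∀ n : ℕ, B (n + 1) = ⋃ a ∈ A, ψ a '' B n)
    (F : Set ℤ) (hF : F = ⋃ n : ℕ, B n)
    :
    Real.log (A.card : ℝ) / Real.log (((1 : ℝ) + (η : ℝ)) * ((N : ℝ) - 1)) ≤
      Filter.limsup (fun M : ℕ =>
        Real.log ((((Finset.Icc (1 : ℤ) (M : ℤ)).filter (fun y : ℤ => y ∈ F)).card : ℝ)) /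
          Real.log (M : ℝ)) Filter.atTop := by
  have hle := card_filter_Icc_le (· ∈ F)
  rcases lt_or_ge #A 2 with hsmall | hd
  · have hlog : log #A = 0 := by interval_cases #A <;> simp
    rw [hlog, zero_div]
    exact limsup_log_div_log_nonneg hle
  have hN : 2 ≤ N := hd.trans (by simpa using card_le_card hA)
  set C := (η + 1) * (N - 1)
  have hC : 2 ≤ C ∧ N ≤ C :=
    ⟨Nat.mul_le_mul (by omega : 2 ≤ η + 1) (by omega : 1 ≤ N - 1),
      (by omega : N ≤ 2 * (N - 1)).trans (Nat.mul_le_mul_right _ (by omega))⟩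
  have hdigits : ∀ a ∈ A, a < C := fun a ha => (mem_range.1 (hA ha)).trans_le hC.2
  have hCcast :
      ((η : ℤ) + 1) * ((N : ℤ) - 1) = C ∧ ((1 : ℝ) + η) * ((N : ℝ) - 1) = C := by
    constructor <;> push_cast [C, Nat.cast_sub (by omega : 1 ≤ N)] <;> ring
  have hBn := eq_coe_digitNumbers (C := C) hB0 (by simpa [hψ, hCcast.1] using hBs)
  rw [hCcast.2]
  refine le_limsup_log_div_log hC.1 (by omega) hle fun n => ?_
  calc #A ^ n ≤ #A ^ (n + 1) - 1 := by
        have := Nat.one_le_pow n _ (by omega : 0 < #A)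
        have := Nat.mul_le_mul_left (#A ^ n) hd
        rw [pow_succ]; omega
    _ ≤ _ := pow_card_sub_one_le_card_filter_Icc hdigits
        (hBn (n + 1) ▸ hF ▸ Set.subset_iUnion B (n + 1))

theorem discrete_zeta_lower
    (k : ℕ) (hk : 3 ≤ k) (ε : ℝ) (hε : 0 < ε) (hε' : ε < 1/16)
    (N : ℕ) (hN : N = ⌈1/(8*ε)⌉₊) (η : ℕ) (hη : 6 ≤ η)
    (A : Finset ℕ) (hA : A ⊆ Finset.range N) (h0A : (0 : ℕ) ∈ A)
    (hAfree : ¬ HasAPNat k (↑A : Set ℕ))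
    (ψ : ℕ → ℤ → ℤ) (hψ : ∀ a x, ψ a x = ((η : ℤ) + 1) * ((N : ℤ) - 1) * x + (a : ℤ))
    (B : ℕ → Set ℤ) (hB0 : B 0 = {0})
    (hBs : ∀ n : ℕ, B (n + 1) = ⋃ a ∈ A, ψ a '' B n)
    (F : Set ℤ) (hF : F = ⋃ n : ℕ, B n)
    :
    Real.log (A.card : ℝ) / Real.log (((1 : ℝ) + (η : ℝ)) * ((N : ℝ) - 1)) ≤
      Filter.limsup (fun M : ℕ =>
        Real.log ((((Finset.Icc (1 : ℤ) (M : ℤ)).filter (fun y : ℤ => y ∈ F)).card : ℝ)) /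
          Real.log (M : ℝ)) Filter.atTop :=
  discrete_zeta_lower_general N η hη A hA ψ hψ B hB0 hBs F hF
end
end

section
/- Fix k ≥ 3 and ε ∈ (0, 1/16). Let N = ⌈1/(8ε)⌉, η ≥ 6 an integer, and A ⊆ {0,...,N-1} with 0 ∈ A containing no arithmetic progression of length k. Let ψ_a(x) = (η+1)(N-1)x + a, B_0 = {0}, B_n = ∪_{a∈A} ψ_a(B_{n-1}), F = ∪_n B_n. Then F contains no (k, ε, {1})-AP: there do not exist Δ > 0 and t ∈ ℝ such that for every j ∈ {0,...,k-1} there is y ∈ F with |t + jΔ − y| ≤ εΔ. -/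
/-!
`F` is the set of integers whose base-`M` expansion, `M = (η + 1)(N - 1)`, has all digits in
`A`. Given an approximate progression, pass to the scale `P = M ^ m` with `8εΔ ≤ P < 8εΔM + 1`
and write each approximating point as `Y_j P + r_j`, where `Y_j ∈ F` and `0 ≤ r_j ≤ (P - 1)/η`.
Since `P` exceeds twice the total error, the `Y_j` form an exact progression with a gap `D`,
and the error bounds force `0 < D < M - N + 1`. The last digits of the `Y_j` then form a
progression with gap `D` inside `A`.
-/

open scoped Classical
open Filter

noncomputable section

def DigitClosed (M : ℤ) (A : Set ℕ) (S : Set ℤ) : Prop :=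
  ∀ x ∈ S, ∃ z ∈ S, ∃ b ∈ A, x = M * z + b

theorem digitClosed_iUnion {M : ℤ} {A : Set ℕ} {ψ : ℕ → ℤ → ℤ} {B : ℕ → Set ℤ} (h0 : 0 ∈ A)
    (hψ : ∀ a x, ψ a x = M * x + a) (hB0 : B 0 = {0})
    (hBs : ∀ n, B (n + 1) = ⋃ a ∈ A, ψ a '' B n) :
    DigitClosed M A (⋃ n, B n) := by
  intro x hx
  obtain ⟨n, hn⟩ := Set.mem_iUnion.mp hx
  cases n with
  | zero =>
    rw [hB0, Set.mem_singleton_iff] at hn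
    exact ⟨0, Set.mem_iUnion.mpr ⟨0, by simp [hB0]⟩, 0, h0, by simp [hn]⟩
  | succ n =>
    simp only [hBs, Set.mem_iUnion, Set.mem_image] at hn
    obtain ⟨a, ha, z, hz, rfl⟩ := hn
    exact ⟨z, Set.mem_iUnion.mpr ⟨n, hz⟩, a, ha, hψ a z⟩

namespace DigitClosed

variable {M : ℤ} {A : Set ℕ} {S : Set ℤ} {β : ℤ}

theorem exists_eq_mul_pow_add (hS : DigitClosed M A S) (hM : 1 ≤ M) (hA : ∀ b ∈ A, (b : ℤ) ≤ β)
    (m : ℕ) {x : ℤ} (hx : x ∈ S) :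
    ∃ z ∈ S, ∃ r : ℤ, 0 ≤ r ∧ (M - 1) * r ≤ β * (M ^ m - 1) ∧ x = z * M ^ m + r := by
  induction m generalizing x with
  | zero => exact ⟨x, hx, 0, le_rfl, by simp, by simp⟩
  | succ m ih =>
    obtain ⟨z, hz, b, hb, rfl⟩ := hS x hx
    obtain ⟨z', hz', r, hr0, hrβ, rfl⟩ := ih hz
    have hb : (b : ℤ) ≤ β := hA b hb
    refine ⟨z', hz', M * r + b, by positivity, ?_, by ring⟩
    calc (M - 1) * (M * r + b) = M * ((M - 1) * r) + (M - 1) * b := by ring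
      _ ≤ M * (β * (M ^ m - 1)) + (M - 1) * β := by gcongr
      _ = β * (M ^ (m + 1) - 1) := by ring

theorem hasAPNat (hS : DigitClosed M A S) (hA : ∀ b ∈ A, (b : ℤ) ≤ β) {k d : ℕ} {x₀ : ℤ}
    (hd : 0 < d) (hdM : d + β < M) (hx : ∀ j < k, x₀ + j * d ∈ S) : HasAPNat k A := by
  have hdigit : ∀ j < k, ∃ b ∈ A, (x₀ + j * d) % M = b := by
    intro j hj
    obtain ⟨z, -, b, hb, hzb⟩ := hS _ (hx j hj)
    refine ⟨b, hb, ?_⟩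
    rw [hzb, Int.mul_add_emod_self_left, Int.emod_eq_of_lt (by positivity) (by linarith [hA b hb])]
  choose! a ha hxa using hdigit
  -- `a j + d < M`, so the residue of `x₀ + (j + 1) d ≡ a j + d` does not wrap around.
  have hlin : ∀ j < k, a j = a 0 + d * j := by
    intro j hj
    induction j with
    | zero => simp
    | succ j ih =>
      have hj' : j < k := by omega
      have hstep : ((a (j + 1) : ℕ) : ℤ) = a j + d := by
        rw [← hxa _ hj, show x₀ + ((j + 1 : ℕ) : ℤ) * d = x₀ + j * d + d by push_cast; ring,
          ← Int.emod_add_emod, hxa _ hj', Int.emod_eq_of_lt (by positivity)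
            (by linarith [hA _ (ha j hj')])]
      rw [ih hj'] at hstep
      push_cast at hstep
      zify
      linear_combination hstep
  exact ⟨a 0, d, hd, fun j => hlin j j.2 ▸ ha j j.2⟩

end DigitClosed

theorem Int.eq_of_abs_mul_sub_le {u v : ℤ} {P x w : ℝ} (hu : |u * P - x| ≤ w)
    (hv : |v * P - x| ≤ w) (hw : 2 * w < P) : u = v := by
  have hP : 0 < P := by linarith [(abs_nonneg _).trans hu]
  have h : |((u - v : ℤ) : ℝ)| * P < P :=
    calc |((u - v : ℤ) : ℝ)| * P = |((u - v : ℤ) : ℝ) * P| := by rw [abs_mul, abs_of_pos hP]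
      _ = |(u * P - x) - (v * P - x)| := by push_cast; ring_nf
      _ ≤ |u * P - x| + |v * P - x| := abs_sub _ _
      _ < P := by linarith
  have h1 : |u - v| < 1 := by exact_mod_cast (mul_lt_iff_lt_one_left hP).mp h
  exact sub_eq_zero.mp (Int.abs_lt_one_iff.mp h1)

theorem eq_add_mul_of_mul_mem_Icc {k : ℕ} {Y : ℕ → ℤ} {P t Δ w : ℝ} (hw : 2 * w < P)
    (hY : ∀ j < k, (Y j : ℝ) * P ∈ Set.Icc (t + j * Δ - w) (t + j * Δ)) :
    ∀ j < k, Y j = Y 0 + j * (Y 1 - Y 0) := by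
  have hstep : ∀ j, j + 1 < k → |((Y (j + 1) - Y j : ℤ) : ℝ) * P - Δ| ≤ w := by
    intro j hj
    obtain ⟨h₁, h₂⟩ := hY j (by omega)
    obtain ⟨h₃, h₄⟩ := hY (j + 1) hj
    push_cast at h₁ h₂ h₃ h₄ ⊢
    rw [abs_le]
    constructor <;> nlinarith
  intro j hj
  induction j with
  | zero => simp
  | succ j ih =>
    have hj := Int.eq_of_abs_mul_sub_le (hstep j hj) (hstep 0 (by omega)) hw
    rw [zero_add] at hj
    push_cast
    linarith [ih (by omega)]

theorem DigitClosed.hasAPNat_of_near {M : ℤ} {A : Set ℕ} {S : Set ℤ} {β : ℤ}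
    (hS : DigitClosed M A S) (hM : 1 < M) (hA : ∀ b ∈ A, (b : ℤ) ≤ β) {k : ℕ} (hk : 3 ≤ k)
    {t Δ δ ρ : ℝ} (m : ℕ) (hρ : β * ((M : ℝ) ^ m - 1) ≤ (M - 1) * ρ)
    (hP : 2 * (2 * δ + ρ) < (M : ℝ) ^ m) (hΔ : 2 * δ + ρ < 2 * Δ)
    (hMP : Δ + (2 * δ + ρ) < (M - β) * (M : ℝ) ^ m)
    (hy : ∀ j : Fin k, ∃ y ∈ S, |t + (j : ℕ) * Δ - (y : ℝ)| ≤ δ) : HasAPNat k A := by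
  set P : ℝ := (M : ℝ) ^ m
  set w := 2 * δ + ρ
  have hP0 : 0 < P := by positivity
  have hM' : (1 : ℝ) < M := by exact_mod_cast hM
  have hnear : ∀ j < k, ∃ Y ∈ S, (Y : ℝ) * P ∈ Set.Icc (t + δ + j * Δ - w) (t + δ + j * Δ) := by
    intro j hj
    obtain ⟨y, hyS, hyt⟩ := hy ⟨j, hj⟩
    obtain ⟨Y, hYS, r, hr0, hrβ, rfl⟩ := hS.exists_eq_mul_pow_add hM.le hA m hyS
    have hr : ((M : ℝ) - 1) * r ≤ (M - 1) * ρ := by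
      refine le_trans ?_ hρ
      simp only [P]
      exact_mod_cast hrβ
    have hr : (r : ℝ) ≤ ρ := le_of_mul_le_mul_left hr (by linarith)
    have hr0 : (0 : ℝ) ≤ r := by exact_mod_cast hr0
    rw [abs_le] at hyt
    push_cast at hyt
    exact ⟨Y, hYS, by constructor <;> linarith⟩
  choose! Y hYS hYP using hnear
  have hlin := eq_add_mul_of_mul_mem_Icc (by linarith) hYP
  set D := Y 1 - Y 0
  -- One step only gives `D P ≥ Δ - w`, which may be negative; two steps give `2 D P ≥ 2Δ - w > 0`.
  have hD0 : 0 < D := by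
    have h₀ := (hYP 0 (by omega)).2
    have h₂ := (hYP 2 (by omega)).1
    rw [hlin 2 (by omega)] at h₂
    push_cast at h₀ h₂
    have : (0 : ℝ) < D * P := by nlinarith
    exact_mod_cast pos_of_mul_pos_left this hP0.le
  have hDM : D + β < M := by
    have h₀ := (hYP 0 (by omega)).1
    have h₁ := (hYP 1 (by omega)).2
    rw [hlin 1 (by omega)] at h₁
    push_cast at h₀ h₁
    have : (D : ℝ) * P < (M - β) * P := by nlinarith
    have := lt_of_mul_lt_mul_right this hP0.le
    exact_mod_cast (by linarith : (D : ℝ) + β < M)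
  lift D to ℕ using hD0.le with d
  exact hS.hasAPNat (x₀ := Y 0) hA (by omega) hDM fun j hj => hlin j hj ▸ hYS j hj

theorem exists_le_pow_and_pow_sub_one_lt {x M : ℝ} (hx : 0 < x) (hM : 1 < M) :
    ∃ m : ℕ, x ≤ M ^ m ∧ M ^ m - 1 < x * M := by
  rcases le_or_gt x 1 with hx1 | hx1
  · exact ⟨0, by simpa using hx1, by rw [pow_zero, sub_self]; exact mul_pos hx (by linarith)⟩
  · obtain ⟨n, hn, hn'⟩ := exists_nat_pow_near hx1.le hM
    refine ⟨n + 1, hn'.le, ?_⟩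
    rw [pow_succ]
    nlinarith

theorem scale_inequalities {ε Δ N η M P : ℝ} (hε : 0 < ε) (hε' : ε < 1 / 16) (hΔ : 0 < Δ)
    (hN : 1 ≤ 8 * ε * N) (hN' : 8 * ε * (N - 1) < 1) (hη : 6 ≤ η) (hM : M = (η + 1) * (N - 1))
    (hP1 : 1 ≤ P) (hP : 8 * ε * Δ ≤ P) (hP' : P - 1 < 8 * ε * Δ * M) :
    (N - 1) * (P - 1) ≤ (M - 1) * ((P - 1) / η) ∧
    2 * (2 * (ε * Δ) + (P - 1) / η) < P ∧
    2 * (ε * Δ) + (P - 1) / η < 2 * Δ ∧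
    Δ + (2 * (ε * Δ) + (P - 1) / η) < (M - (N - 1)) * P := by
  have hN2 : 2 ≤ N := by nlinarith
  have hη0 : 0 < η := by linarith
  have hρP : (P - 1) / η ≤ (P - 1) / 6 := div_le_div_of_nonneg_left (by linarith) (by norm_num) hη
  refine ⟨?_, by linarith, ?_, ?_⟩
  · rw [mul_div_assoc', le_div_iff₀ hη0]
    nlinarith
  · have hPΔ : P - 1 < Δ * (η + 1) := by
      rw [hM] at hP'
      nlinarith [mul_pos hΔ (by linarith : 0 < η + 1)]
    have : (P - 1) / η < 7 / 6 * Δ := by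
      rw [div_lt_iff₀ hη0]
      nlinarith
    nlinarith
  · have hΔN : Δ ≤ N * P := by nlinarith
    have h6 : 6 * ((N - 1) * P) ≤ η * ((N - 1) * P) :=
      mul_le_mul_of_nonneg_right hη (by nlinarith)
    rw [hM]
    nlinarith

theorem discrete_no_approx_AP
    (k : ℕ) (hk : 3 ≤ k) (ε : ℝ) (hε : 0 < ε) (hε' : ε < 1/16)
    (N : ℕ) (hN : N = ⌈1/(8*ε)⌉₊) (η : ℕ) (hη : 6 ≤ η)
    (A : Finset ℕ) (hA : A ⊆ Finset.range N) (h0A : (0 : ℕ) ∈ A)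
    (hAfree : ¬ HasAPNat k (↑A : Set ℕ))
    (ψ : ℕ → ℤ → ℤ) (hψ : ∀ a x, ψ a x = ((η : ℤ) + 1) * ((N : ℤ) - 1) * x + (a : ℤ))
    (B : ℕ → Set ℤ) (hB0 : B 0 = {0})
    (hBs : ∀ n : ℕ, B (n + 1) = ⋃ a ∈ A, ψ a '' B n)
    (F : Set ℤ) (hF : F = ⋃ n : ℕ, B n)
    :
    ¬ ∃ t Δ : ℝ, 0 < Δ ∧ ∀ j : Fin k, ∃ y ∈ F, |t + (j : ℕ) * Δ - (y : ℝ)| ≤ ε * Δ := by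
  rintro ⟨t, Δ, hΔ, hAP⟩
  set M : ℤ := ((η : ℤ) + 1) * ((N : ℤ) - 1) with hM
  have hεN : 1 ≤ 8 * ε * N := by
    rw [← div_le_iff₀' (by positivity), hN]
    exact Nat.le_ceil _
  have hεN' : 8 * ε * (N - 1) < 1 := by
    have := hN ▸ Nat.ceil_lt_add_one (by positivity : 0 ≤ 1 / (8 * ε))
    rw [← lt_div_iff₀' (by positivity)]
    linarith
  have hN2 : 2 ≤ N := by
    have : (2 : ℝ) < N := by nlinarith
    exact_mod_cast this.le
  have hM1 : 1 < M := by nlinarith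
  obtain ⟨m, hm, hm'⟩ := exists_le_pow_and_pow_sub_one_lt (x := 8 * ε * Δ) (by positivity)
    (by exact_mod_cast hM1 : (1 : ℝ) < M)
  obtain ⟨hρ, hP, hΔ2, hMP⟩ := scale_inequalities hε hε' hΔ hεN hεN'
    (by exact_mod_cast hη : (6 : ℝ) ≤ η) (by push_cast [hM]; ring)
    (one_le_pow₀ (by exact_mod_cast hM1.le)) hm hm'
  refine hAfree <| (digitClosed_iUnion h0A hψ hB0 hBs).hasAPNat_of_near hM1 (β := N - 1)
    (fun b hb => ?_) hk m (δ := ε * Δ) ?_ hP hΔ2 ?_ (hF ▸ hAP)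
  · have := Finset.mem_range.mp (hA hb)
    omega
  · push_cast
    exact hρ
  · push_cast
    exact hMP
end
end
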